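/- arXiv:2010.08167 — 2 statements merged into one kernel-verified Lean document; each statement's English description precedes it below -/
import Mathlib

section
/- If φ is a truncated moment sequence of order r coming from a probability measure μ on ℝⁿ and L_φ(‖y‖^r) = ‖L_φ(y)‖^r with r even and r ≥ 2, then μ-almost every y satisfies y = L_φ(y); i.e., μ is a Dirac measure (up to null sets). -/
open MeasureTheory

lemma strictConvexOn_norm_pow {n r : ℕ} (hr2 : 2 ≤ r) :
    StrictConvexOn ℝ Set.univ (fun y : EuclideanSpace ℝ (Fin n) => ‖y‖ ^ r) := by
  refine ⟨convex_univ, fun x _ y _ hxy a b ha hb hab => ?_⟩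
  rcases eq_or_ne ‖x‖ ‖y‖ with h | h
  · have hlt : ‖a • x + b • y‖ < ‖x‖ :=
      norm_combo_lt_of_ne le_rfl h.ge hxy ha hb hab
    have hpow : ‖a • x + b • y‖ ^ r < ‖x‖ ^ r :=
      pow_lt_pow_left₀ hlt (norm_nonneg _) (by omega)
    calc ‖a • x + b • y‖ ^ r < ‖x‖ ^ r := hpow
      _ = a * ‖x‖ ^ r + b * ‖y‖ ^ r := by rw [← h, ← add_mul, hab, one_mul]
  · have h1 : ‖a • x + b • y‖ ≤ a * ‖x‖ + b * ‖y‖ := by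
      calc ‖a • x + b • y‖ ≤ ‖a • x‖ + ‖b • y‖ := norm_add_le _ _
        _ = a * ‖x‖ + b * ‖y‖ := by rw [norm_smul, norm_smul, Real.norm_of_nonneg ha.le,
            Real.norm_of_nonneg hb.le]
    have h2 : (a * ‖x‖ + b * ‖y‖) ^ r < a * ‖x‖ ^ r + b * ‖y‖ ^ r :=
      (strictConvexOn_pow hr2).2 (Set.mem_Ici.2 (norm_nonneg x)) (Set.mem_Ici.2 (norm_nonneg y))
        h ha hb hab
    calc ‖a • x + b • y‖ ^ r ≤ (a * ‖x‖ + b * ‖y‖) ^ r :=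
          pow_le_pow_left₀ (norm_nonneg _) h1 r
      _ < _ := h2

/-- if φ is the truncated moment sequence of order r (r even, r ≥ 2) of a
probability measure μ on ℝⁿ and L_φ(‖y‖^r) = ‖L_φ(y)‖^r, i.e.
∫ ‖y‖^r dμ = ‖∫ y dμ‖^r, then μ-almost every y equals the mean L_φ(y) = ∫ y dμ;
i.e. μ is a Dirac measure up to null sets. -/
theorem moment_equality_implies_dirac
    (n r : ℕ) (hr2 : 2 ≤ r) (hre : Even r)
    (μ : Measure (EuclideanSpace ℝ (Fin n))) [IsProbabilityMeasure μ]
    (h1 : Integrable (fun y => y) μ)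
    (hrint : Integrable (fun y => ‖y‖ ^ r) μ)
    (heq : ∫ y, ‖y‖ ^ r ∂μ = ‖∫ y, y ∂μ‖ ^ r) :
    ∀ᵐ y ∂μ, y = ∫ x, x ∂μ := by
  have hg := (strictConvexOn_norm_pow (n := n) hr2)
  have hgc : ContinuousOn (fun y : EuclideanSpace ℝ (Fin n) => ‖y‖ ^ r) Set.univ :=
    (continuous_norm.pow r).continuousOn
  have := hg.ae_eq_const_or_map_average_lt hgc isClosed_univ
    (Filter.Eventually.of_forall fun x => Set.mem_univ x) h1 hrint
  rcases this with h | h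
  · filter_upwards [h] with y hy
    simpa [average_eq_integral] using hy
  · exfalso
    rw [average_eq_integral, average_eq_integral] at h
    rw [heq] at h
    exact lt_irrefl _ h
end

section
/- A univariate polynomial p ∈ ℝ[t] is nonnegative on the interval [0, T] (T > 0) if and only if it can be written as p(t) = σ₀(t) + t(T − t)σ₁(t) if deg p is even, or p(t) = t σ₀(t) + (T − t) σ₁(t) if deg p is odd, where σ₀, σ₁ are sums of squares of polynomials of appropriate degrees. -/
/-!
Induction on the degree. A polynomial `p ≥ 0` on `[0, T]` of positive degree factors as `f * g`
with `g ≥ 0` on `[0, T]`, where either `f` is linear and nonnegative at `0` and `T`, or `f` is a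
sum of squares of degree two: a real root outside `(0, T)` gives the linear factor, a real root
inside `(0, T)` must be a double root, and without real roots an irreducible quadratic factor is
positive definite. A linear `f` is a nonnegative combination of `X` and `T - X`, and multiplying by
either of these exchanges the two shapes of certificate, e.g.
`X * (σ₀ + X (T - X) σ₁) = X σ₀ + (T - X) (X² σ₁)`.
Degrees are controlled by bounding each of the two terms of a certificate separately.
-/

open Polynomial Set

theorem IsSumSq.map {R S : Type*} [NonAssocSemiring R] [NonAssocSemiring S] (f : R →+* S)
    {s : R} (hs : IsSumSq s) : IsSumSq (f s) := by
  induction hs with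
  | zero => simp [IsSumSq.zero]
  | sq_add a _ ih => simpa using IsSumSq.sq_add (f a) ih

namespace Polynomial

section Linear

variable {R : Type*}

theorem eval_X_sub_C [Ring R] (r t : R) : (X - C r).eval t = t - r := by simp

theorem eval_C_sub_X [Ring R] (r t : R) : (C r - X).eval t = r - t := by simp

theorem natDegree_C_sub_X [Ring R] [Nontrivial R] (T : R) : (C T - X).natDegree = 1 := by
  rw [natDegree_sub_eq_right_of_natDegree_lt] <;> simp

theorem natDegree_C_sub_X_le [Ring R] (T : R) : (C T - X).natDegree ≤ 1 :=
  (natDegree_sub_le _ _).trans (max_le ((natDegree_C T).trans_le zero_le_one) natDegree_X_le)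

theorem C_sub_X_ne_zero [Ring R] [Nontrivial R] (T : R) : C T - X ≠ 0 :=
  ne_zero_of_natDegree_gt (n := 0) (by rw [natDegree_C_sub_X]; exact one_pos)

theorem natDegree_X_mul_C_sub_X [Ring R] [NoZeroDivisors R] [Nontrivial R] (T : R) :
    (X * (C T - X)).natDegree = 2 := by
  rw [natDegree_mul X_ne_zero (C_sub_X_ne_zero T), natDegree_X, natDegree_C_sub_X]

theorem natDegree_mul_le_succ_of_natDegree_le_one [Semiring R] {ℓ q : R[X]} {n : ℕ}
    (hℓ : ℓ.natDegree ≤ 1) (hq : q.natDegree ≤ n) : (ℓ * q).natDegree ≤ n + 1 :=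
  (natDegree_mul_le_of_le hℓ hq).trans_eq (add_comm _ _)

end Linear

theorem eval_nonneg_of_isSumSq {σ : ℝ[X]} (hσ : IsSumSq σ) (t : ℝ) : 0 ≤ σ.eval t :=
  (hσ.map (evalRingHom t)).nonneg

theorem isSumSq_C {c : ℝ} (hc : 0 ≤ c) : IsSumSq (C c) := by
  rw [← Real.mul_self_sqrt hc, C_mul]
  exact IsSumSq.mul_self _

theorem isSumSq_quadratic_of_forall_not_isRoot (a b : ℝ)
    (h : ∀ x, ¬ (X ^ 2 + C a * X + C b).IsRoot x) : IsSumSq (X ^ 2 + C a * X + C b) := by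
  set d := b - a ^ 2 / 4 with hd_def
  have hd : 0 ≤ d := by
    by_contra! hd
    apply h (-a / 2 + √(-d))
    have := Real.sq_sqrt (neg_nonneg.mpr hd.le)
    simp only [IsRoot, eval_add, eval_mul, eval_pow, eval_X, eval_C]
    linear_combination this
  have h₁ : (C a : ℝ[X]) = C (a / 2) + C (a / 2) := by rw [← C_add, add_halves]
  have h₂ : (C b : ℝ[X]) = C (a / 2) * C (a / 2) + C d := by rw [← C_mul, ← C_add, hd_def]; ring_nf
  rw [show X ^ 2 + C a * X + C b = (X + C (a / 2)) * (X + C (a / 2)) + C d by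
    rw [h₁, h₂]; ring]
  exact (IsSumSq.mul_self _).add (isSumSq_C hd)

/-- A monic irreducible factor has degree at most two, and not one since `p` has no real roots. -/
theorem exists_isSumSq_factor_of_forall_not_isRoot {p : ℝ[X]} (hp : 0 < p.natDegree)
    (hroot : ∀ x, ¬ p.IsRoot x) : ∃ f g, p = f * g ∧ f.natDegree = 2 ∧ IsSumSq f := by
  obtain ⟨f, hmonic, hirr, g, rfl⟩ :=
    exists_monic_irreducible_factor p (not_isUnit_of_natDegree_pos p hp)
  have hf : ∀ x, ¬ f.IsRoot x := fun x hx => hroot x (by simp [IsRoot, hx.eq_zero])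
  have hdeg : f.natDegree = 2 := by
    have h1 : f.natDegree ≠ 1 := fun h1 =>
      (exists_root_of_degree_eq_one (degree_eq_iff_natDegree_eq_of_pos one_pos |>.mpr h1)).elim hf
    have := hirr.natDegree_pos
    have := hirr.natDegree_le_two
    omega
  obtain ⟨a, b, rfl⟩ := isMonicOfDegree_two_iff.mp (IsMonicOfDegree.mk hdeg hmonic)
  exact ⟨_, g, rfl, hdeg, isSumSq_quadratic_of_forall_not_isRoot a b hf⟩

/-- Off the finitely many roots of `f` this is pointwise; those roots are limits of other points. -/
theorem eval_nonneg_of_eval_mul_nonneg {a b : ℝ} (hab : a < b) {f g : ℝ[X]} (hf : f ≠ 0)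
    (hf₀ : ∀ t ∈ Ioo a b, 0 ≤ f.eval t) (hfg : ∀ t ∈ Ioo a b, 0 ≤ (f * g).eval t) :
    ∀ t ∈ Icc a b, 0 ≤ g.eval t := by
  have hclosed : IsClosed {t | 0 ≤ g.eval t} := isClosed_le continuous_const g.continuous
  have hdense : Dense {x | f.IsRoot x}ᶜ := (finite_setOfPred_isRoot hf).countable.dense_compl ℝ
  have hgood : Ioo a b ∩ {x | f.IsRoot x}ᶜ ⊆ {t | 0 ≤ g.eval t} := fun t ⟨ht, hroot⟩ =>
    nonneg_of_mul_nonneg_right (by simpa using hfg t ht)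
      (lt_of_le_of_ne (hf₀ t ht) (Ne.symm hroot))
  rw [← closure_Ioo hab.ne]
  exact closure_minimal
    ((hdense.open_subset_closure_inter isOpen_Ioo).trans (closure_minimal hgood hclosed)) hclosed

end Polynomial

section Interval

variable {T : ℝ}

def IsBasicFactor (T : ℝ) (f : ℝ[X]) : Prop :=
  (f.natDegree = 1 ∧ 0 ≤ f.eval 0 ∧ 0 ≤ f.eval T) ∨ (f.natDegree = 2 ∧ IsSumSq f)

/-- `X - r` changes sign at `r`, so `g` must change sign there too. -/
theorem isRoot_of_eval_X_sub_C_mul_nonneg {r : ℝ} (hr : r ∈ Ioo 0 T) {g : ℝ[X]}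
    (hp : ∀ t ∈ Icc 0 T, 0 ≤ ((X - C r) * g).eval t) : g.IsRoot r := by
  have hright : 0 ≤ g.eval r :=
    eval_nonneg_of_eval_mul_nonneg hr.2 (X_sub_C_ne_zero r)
      (fun t ht => by rw [eval_X_sub_C]; linarith [ht.1])
      (fun t ht => hp t ⟨by linarith [hr.1, ht.1], ht.2.le⟩) r ⟨le_rfl, hr.2.le⟩
  have hleft : 0 ≤ (-g).eval r :=
    eval_nonneg_of_eval_mul_nonneg hr.1 (C_sub_X_ne_zero r)
      (fun t ht => by rw [eval_C_sub_X]; linarith [ht.2])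
      (fun t ht => by
        rw [show (C r - X) * -g = (X - C r) * g by ring]
        exact hp t ⟨ht.1.le, by linarith [hr.2, ht.2]⟩) r ⟨hr.1.le, le_rfl⟩
  exact le_antisymm (by simpa using hleft) hright

/-- A root outside `(0, T)` splits off a linear factor of constant sign on `[0, T]`, a root
inside `(0, T)` a square. -/
theorem exists_isBasicFactor_of_isRoot (hT : 0 < T) {p : ℝ[X]}
    (hp : ∀ t ∈ Icc 0 T, 0 ≤ p.eval t) {r : ℝ} (hr : p.IsRoot r) :
    ∃ f g, p = f * g ∧ (∀ t ∈ Icc 0 T, 0 ≤ g.eval t) ∧ IsBasicFactor T f := by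
  obtain ⟨g, rfl⟩ := dvd_iff_isRoot.mpr hr
  have hp' (t : ℝ) (ht : t ∈ Ioo 0 T) := hp t (Ioo_subset_Icc_self ht)
  rcases le_or_gt r 0 with hr0 | hr0
  · refine ⟨X - C r, g, rfl, ?_, Or.inl ⟨natDegree_X_sub_C r, ?_, ?_⟩⟩
    · exact eval_nonneg_of_eval_mul_nonneg hT (X_sub_C_ne_zero r)
        (fun t ht => by rw [eval_X_sub_C]; linarith [ht.1]) hp'
    all_goals rw [eval_X_sub_C]; linarith
  rcases le_or_gt T r with hrT | hrT
  · have hneg : (X - C r) * g = (C r - X) * -g := by ring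
    refine ⟨C r - X, -g, hneg, ?_, Or.inl ⟨natDegree_C_sub_X r, ?_, ?_⟩⟩
    · exact eval_nonneg_of_eval_mul_nonneg hT (C_sub_X_ne_zero r)
        (fun t ht => by rw [eval_C_sub_X]; linarith [ht.2]) (hneg ▸ hp')
    all_goals rw [eval_C_sub_X]; linarith
  obtain ⟨h, rfl⟩ := dvd_iff_isRoot.mpr (isRoot_of_eval_X_sub_C_mul_nonneg ⟨hr0, hrT⟩ hp)
  have hsq : (X - C r) * ((X - C r) * h) = (X - C r) ^ 2 * h := by ring
  refine ⟨(X - C r) ^ 2, h, hsq, ?_, Or.inr ⟨by simp [natDegree_pow], ?_⟩⟩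
  · exact eval_nonneg_of_eval_mul_nonneg hT (pow_ne_zero 2 (X_sub_C_ne_zero r))
      (fun t _ => by rw [eval_pow]; positivity) (hsq ▸ hp')
  · rw [sq]
    exact IsSumSq.mul_self _

theorem exists_isBasicFactor (hT : 0 < T) {p : ℝ[X]} (hp : ∀ t ∈ Icc 0 T, 0 ≤ p.eval t)
    (hdeg : 0 < p.natDegree) :
    ∃ f g, p = f * g ∧ (∀ t ∈ Icc 0 T, 0 ≤ g.eval t) ∧ IsBasicFactor T f := by
  by_cases hroot : ∃ r, p.IsRoot r
  · obtain ⟨r, hr⟩ := hroot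
    exact exists_isBasicFactor_of_isRoot hT hp hr
  obtain ⟨f, g, rfl, hf₂, hf⟩ :=
    exists_isSumSq_factor_of_forall_not_isRoot hdeg (not_exists.mp hroot)
  have hf₀ : f ≠ 0 := ne_zero_of_natDegree_gt (n := 0) (by omega)
  exact ⟨f, g, rfl, eval_nonneg_of_eval_mul_nonneg hT hf₀ (fun t _ => eval_nonneg_of_isSumSq hf t)
    (fun t ht => hp t (Ioo_subset_Icc_self ht)), Or.inr ⟨hf₂, hf⟩⟩

end Interval

section WeightedSumSq

variable {R : Type*} [CommSemiring R] {u v p q : R[X]} {n : ℕ}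

def IsWeightedSumSq (u v : R[X]) (n : ℕ) (p : R[X]) : Prop :=
  ∃ σ₀ σ₁ : R[X], IsSumSq σ₀ ∧ IsSumSq σ₁ ∧ (u * σ₀).natDegree ≤ n ∧ (v * σ₁).natDegree ≤ n ∧
    p = u * σ₀ + v * σ₁

theorem IsWeightedSumSq.add (hp : IsWeightedSumSq u v n p) (hq : IsWeightedSumSq u v n q) :
    IsWeightedSumSq u v n (p + q) := by
  obtain ⟨σ₀, σ₁, hσ₀, hσ₁, hd₀, hd₁, rfl⟩ := hp
  obtain ⟨τ₀, τ₁, hτ₀, hτ₁, he₀, he₁, rfl⟩ := hq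
  refine ⟨σ₀ + τ₀, σ₁ + τ₁, hσ₀.add hτ₀, hσ₁.add hτ₁, ?_, ?_, by ring⟩
  · rw [mul_add]; exact natDegree_add_le_of_degree_le hd₀ he₀
  · rw [mul_add]; exact natDegree_add_le_of_degree_le hd₁ he₁

theorem IsWeightedSumSq.sumSq_mul {g : R[X]} (hg : IsSumSq g) (hp : IsWeightedSumSq u v n p) :
    IsWeightedSumSq u v (g.natDegree + n) (g * p) := by
  obtain ⟨σ₀, σ₁, hσ₀, hσ₁, hd₀, hd₁, rfl⟩ := hp
  refine ⟨g * σ₀, g * σ₁, hg.mul hσ₀, hg.mul hσ₁, ?_, ?_, by ring⟩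
  · rw [mul_left_comm]; exact natDegree_mul_le_of_le le_rfl hd₀
  · rw [mul_left_comm]; exact natDegree_mul_le_of_le le_rfl hd₁

end WeightedSumSq

section LukacsWeights

variable {R : Type*} [CommRing R] {T : R} {p : R[X]} {n : ℕ}

theorem IsWeightedSumSq.X_mul_of_one (hp : IsWeightedSumSq 1 (X * (C T - X)) n p) :
    IsWeightedSumSq X (C T - X) (n + 1) (X * p) := by
  obtain ⟨σ₀, σ₁, hσ₀, hσ₁, hd₀, hd₁, rfl⟩ := hp
  refine ⟨σ₀, X * X * σ₁, hσ₀, (IsSumSq.mul_self X).mul hσ₁, ?_, ?_, by ring⟩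
  · rw [show X * σ₀ = X * (1 * σ₀) by ring]
    exact natDegree_mul_le_succ_of_natDegree_le_one natDegree_X_le hd₀
  · rw [show (C T - X) * (X * X * σ₁) = X * (X * (C T - X) * σ₁) by ring]
    exact natDegree_mul_le_succ_of_natDegree_le_one natDegree_X_le hd₁

theorem IsWeightedSumSq.C_sub_X_mul_of_one (hp : IsWeightedSumSq 1 (X * (C T - X)) n p) :
    IsWeightedSumSq X (C T - X) (n + 1) ((C T - X) * p) := by
  obtain ⟨σ₀, σ₁, hσ₀, hσ₁, hd₀, hd₁, rfl⟩ := hp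
  refine ⟨(C T - X) * (C T - X) * σ₁, σ₀, (IsSumSq.mul_self _).mul hσ₁, hσ₀, ?_, ?_, by ring⟩
  · rw [show X * ((C T - X) * (C T - X) * σ₁) = (C T - X) * (X * (C T - X) * σ₁) by ring]
    exact natDegree_mul_le_succ_of_natDegree_le_one (natDegree_C_sub_X_le T) hd₁
  · rw [show (C T - X) * σ₀ = (C T - X) * (1 * σ₀) by ring]
    exact natDegree_mul_le_succ_of_natDegree_le_one (natDegree_C_sub_X_le T) hd₀

theorem IsWeightedSumSq.X_mul_of_X (hp : IsWeightedSumSq X (C T - X) n p) :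
    IsWeightedSumSq 1 (X * (C T - X)) (n + 1) (X * p) := by
  obtain ⟨σ₀, σ₁, hσ₀, hσ₁, hd₀, hd₁, rfl⟩ := hp
  refine ⟨X * X * σ₀, σ₁, (IsSumSq.mul_self X).mul hσ₀, hσ₁, ?_, ?_, by ring⟩
  · rw [show 1 * (X * X * σ₀) = X * (X * σ₀) by ring]
    exact natDegree_mul_le_succ_of_natDegree_le_one natDegree_X_le hd₀
  · rw [mul_assoc]
    exact natDegree_mul_le_succ_of_natDegree_le_one natDegree_X_le hd₁

theorem IsWeightedSumSq.C_sub_X_mul_of_X (hp : IsWeightedSumSq X (C T - X) n p) :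
    IsWeightedSumSq 1 (X * (C T - X)) (n + 1) ((C T - X) * p) := by
  obtain ⟨σ₀, σ₁, hσ₀, hσ₁, hd₀, hd₁, rfl⟩ := hp
  refine ⟨(C T - X) * (C T - X) * σ₁, σ₀, (IsSumSq.mul_self _).mul hσ₁, hσ₀, ?_, ?_, by ring⟩
  · rw [show 1 * ((C T - X) * (C T - X) * σ₁) = (C T - X) * ((C T - X) * σ₁) by ring]
    exact natDegree_mul_le_succ_of_natDegree_le_one (natDegree_C_sub_X_le T) hd₁
  · rw [show X * (C T - X) * σ₀ = (C T - X) * (X * σ₀) by ring]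
    exact natDegree_mul_le_succ_of_natDegree_le_one (natDegree_C_sub_X_le T) hd₀

end LukacsWeights

section LukacsRep

variable {T : ℝ} {p : ℝ[X]} {n : ℕ}

def IsLukacsRep (T : ℝ) (n : ℕ) (p : ℝ[X]) : Prop :=
  if Even n then IsWeightedSumSq 1 (X * (C T - X)) n p else IsWeightedSumSq X (C T - X) n p

theorem isLukacsRep_C {c : ℝ} (hc : 0 ≤ c) : IsLukacsRep T 0 (C c) := by
  rw [IsLukacsRep, if_pos ⟨0, rfl⟩]
  exact ⟨C c, 0, isSumSq_C hc, IsSumSq.zero, by simp, by simp, by ring⟩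

theorem IsLukacsRep.add {q : ℝ[X]} (hp : IsLukacsRep T n p) (hq : IsLukacsRep T n q) :
    IsLukacsRep T n (p + q) := by
  unfold IsLukacsRep at *
  split_ifs at * <;> exact hp.add hq

theorem IsLukacsRep.sumSq_mul {g : ℝ[X]} (hg : IsSumSq g) (hg₂ : Even g.natDegree)
    (hp : IsLukacsRep T n p) : IsLukacsRep T (g.natDegree + n) (g * p) := by
  unfold IsLukacsRep at *
  simp only [Nat.even_add, hg₂, true_iff]
  split_ifs at * <;> exact hp.sumSq_mul hg

theorem IsLukacsRep.X_mul (hp : IsLukacsRep T n p) : IsLukacsRep T (n + 1) (X * p) := by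
  unfold IsLukacsRep at *
  simp only [Nat.even_add_one, ite_not]
  split_ifs at *
  · exact hp.X_mul_of_one
  · exact hp.X_mul_of_X

theorem IsLukacsRep.C_sub_X_mul (hp : IsLukacsRep T n p) :
    IsLukacsRep T (n + 1) ((C T - X) * p) := by
  unfold IsLukacsRep at *
  simp only [Nat.even_add_one, ite_not]
  split_ifs at *
  · exact hp.C_sub_X_mul_of_one
  · exact hp.C_sub_X_mul_of_X

theorem IsLukacsRep.C_mul {c : ℝ} (hc : 0 ≤ c) (hp : IsLukacsRep T n p) :
    IsLukacsRep T n (C c * p) := by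
  simpa using hp.sumSq_mul (isSumSq_C hc) (by simp)

/-- Interpolation at `0` and `T`: `f = (f(T)/T) X + (f(0)/T) (T - X)` for `deg f ≤ 1`. -/
theorem IsLukacsRep.mul_of_natDegree_le_one (hT : 0 < T) {f : ℝ[X]} (hf : f.natDegree ≤ 1)
    (hf₀ : 0 ≤ f.eval 0) (hfT : 0 ≤ f.eval T) (hp : IsLukacsRep T n p) :
    IsLukacsRep T (n + 1) (f * p) := by
  have hinterp : f = C (f.eval T / T) * X + C (f.eval 0 / T) * (C T - X) := by
    rw [eq_X_add_C_of_natDegree_le_one hf]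
    simp only [eval_add, eval_mul, eval_C, eval_X, mul_zero, zero_add]
    rw [add_div, mul_div_cancel_right₀ _ hT.ne', C_add, mul_sub, ← Polynomial.C_mul,
      div_mul_cancel₀ _ hT.ne']
    ring
  rw [hinterp, add_mul, mul_assoc, mul_assoc]
  exact (hp.X_mul.C_mul (div_nonneg hfT hT.le)).add (hp.C_sub_X_mul.C_mul (div_nonneg hf₀ hT.le))

theorem IsLukacsRep.isBasicFactor_mul (hT : 0 < T) {f : ℝ[X]} (hf : IsBasicFactor T f)
    (hp : IsLukacsRep T n p) : IsLukacsRep T (f.natDegree + n) (f * p) := by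
  rcases hf with ⟨hf₁, hf₀, hfT⟩ | ⟨hf₂, hf⟩
  · rw [hf₁, add_comm]
    exact hp.mul_of_natDegree_le_one hT hf₁.le hf₀ hfT
  · exact hp.sumSq_mul hf (by rw [hf₂]; exact ⟨1, rfl⟩)

theorem isLukacsRep_natDegree_of_nonneg (hT : 0 < T) (hp : ∀ t ∈ Icc 0 T, 0 ≤ p.eval t) :
    IsLukacsRep T p.natDegree p := by
  induction hn : p.natDegree using Nat.strong_induction_on generalizing p with
  | _ n ih =>
  rcases Nat.eq_zero_or_pos n with rfl | hpos
  · obtain ⟨c, rfl⟩ := natDegree_eq_zero.mp hn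
    exact isLukacsRep_C (by simpa using hp 0 ⟨le_rfl, hT.le⟩)
  obtain ⟨f, g, rfl, hg, hf⟩ := exists_isBasicFactor hT hp (hn ▸ hpos)
  have hfg : f * g ≠ 0 := ne_zero_of_natDegree_gt (hn ▸ hpos)
  rw [natDegree_mul (left_ne_zero_of_mul hfg) (right_ne_zero_of_mul hfg)] at hn
  have hf₁ : 0 < f.natDegree := by rcases hf with ⟨h, -⟩ | ⟨h, -⟩ <;> omega
  rw [← hn]
  exact (ih g.natDegree (by omega) hg rfl).isBasicFactor_mul hT hf

end LukacsRep

theorem IsWeightedSumSq.exists_natDegree_le_of_one {T : ℝ} {n : ℕ} {p : ℝ[X]}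
    (hp : IsWeightedSumSq 1 (X * (C T - X)) n p) :
    ∃ σ₀ σ₁ : ℝ[X], IsSumSq σ₀ ∧ IsSumSq σ₁ ∧
      σ₀.natDegree ≤ n ∧ σ₁.natDegree + 2 ≤ max n 2 ∧ p = σ₀ + X * (C T - X) * σ₁ := by
  obtain ⟨σ₀, σ₁, hσ₀, hσ₁, hd₀, hd₁, rfl⟩ := hp
  refine ⟨σ₀, σ₁, hσ₀, hσ₁, by simpa using hd₀, ?_, by ring⟩
  rcases eq_or_ne σ₁ 0 with rfl | hσ₁₀
  · simp
  rw [natDegree_mul (mul_ne_zero X_ne_zero (C_sub_X_ne_zero T)) hσ₁₀,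
    natDegree_X_mul_C_sub_X] at hd₁
  omega

theorem IsWeightedSumSq.exists_natDegree_le_of_X {T : ℝ} {n : ℕ} {p : ℝ[X]} (hn : 1 ≤ n)
    (hp : IsWeightedSumSq X (C T - X) n p) :
    ∃ σ₀ σ₁ : ℝ[X], IsSumSq σ₀ ∧ IsSumSq σ₁ ∧
      σ₀.natDegree + 1 ≤ n ∧ σ₁.natDegree + 1 ≤ n ∧ p = X * σ₀ + (C T - X) * σ₁ := by
  obtain ⟨σ₀, σ₁, hσ₀, hσ₁, hd₀, hd₁, rfl⟩ := hp
  refine ⟨σ₀, σ₁, hσ₀, hσ₁, ?_, ?_, rfl⟩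
  · rcases eq_or_ne σ₀ 0 with rfl | hσ₀₀
    · simpa using hn
    rwa [natDegree_mul X_ne_zero hσ₀₀, natDegree_X, add_comm] at hd₀
  · rcases eq_or_ne σ₁ 0 with rfl | hσ₁₀
    · simpa using hn
    rwa [natDegree_mul (C_sub_X_ne_zero T) hσ₁₀, natDegree_C_sub_X, add_comm] at hd₁

/-- Markov–Lukács: a univariate polynomial p ∈ ℝ[t] is nonnegative on
[0, T] (T > 0) if and only if p = σ₀ + t(T − t)σ₁ when deg p is even, or
p = tσ₀ + (T − t)σ₁ when deg p is odd, with σ₀, σ₁ sums of squares of appropriate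
degrees. -/
theorem markov_lukacs (T : ℝ) (hT : 0 < T) (p : ℝ[X]) :
    (∀ t ∈ Set.Icc (0 : ℝ) T, 0 ≤ p.eval t) ↔
      ((Even p.natDegree ∧
          ∃ σ₀ σ₁ : ℝ[X], IsSumSq σ₀ ∧ IsSumSq σ₁ ∧
            σ₀.natDegree ≤ p.natDegree ∧ σ₁.natDegree + 2 ≤ max p.natDegree 2 ∧
            p = σ₀ + X * (C T - X) * σ₁) ∨
        (¬ Even p.natDegree ∧
          ∃ σ₀ σ₁ : ℝ[X], IsSumSq σ₀ ∧ IsSumSq σ₁ ∧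
            σ₀.natDegree + 1 ≤ p.natDegree ∧ σ₁.natDegree + 1 ≤ p.natDegree ∧
            p = X * σ₀ + (C T - X) * σ₁)) := by
  constructor
  · intro hp
    have hrep := isLukacsRep_natDegree_of_nonneg hT hp
    unfold IsLukacsRep at hrep
    split_ifs at hrep with hn
    · exact Or.inl ⟨hn, hrep.exists_natDegree_le_of_one⟩
    · have hn₁ : 1 ≤ p.natDegree := Nat.one_le_iff_ne_zero.mpr fun h => hn (h ▸ ⟨0, rfl⟩)
      exact Or.inr ⟨hn, hrep.exists_natDegree_le_of_X hn₁⟩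
  · rintro (⟨-, σ₀, σ₁, hσ₀, hσ₁, -, -, rfl⟩ | ⟨-, σ₀, σ₁, hσ₀, hσ₁, -, -, rfl⟩) t ⟨ht₀, htT⟩
      <;> have h₀ := eval_nonneg_of_isSumSq hσ₀ t
      <;> have h₁ := eval_nonneg_of_isSumSq hσ₁ t
      <;> have hTt : 0 ≤ T - t := sub_nonneg.mpr htT
      <;> simp only [eval_add, eval_mul, eval_sub, eval_X, eval_C]
      <;> positivity
end
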